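/- Let ω be a braidless fundamental weight of a root system Φ and let τ_ℓ = s_{i_1} ⋯ s_{i_N} be a reduced decomposition of the longest minimal coset representative in ᵚW. If σ is a permutation of {1,…,N} arising from a series of exchanges of adjacent commuting simple reflections in this word, then σ(1) = 1; moreover, if j < k and either s_{i_j} and s_{i_k} do not commute or i_j = i_k, then σ⁻¹(j) < σ⁻¹(k). -/

import Mathlib

/-! The letter `i₀` is the only possible left descent of a minimal coset representative of
`W_ω\W`, so every reduced word of `τ_ℓ` starts with `s_{i₀}`. Exchanging adjacent commuting
letters keeps the word a reduced word of `τ_ℓ`, and it can never swap two letters that do not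
commute (equal letters do not commute, as `m(i, i) = 1`); hence the relative order of such
letters is preserved. In particular the letter `s_{i₀}` at the first position, which would
have to be replaced by another occurrence of `s_{i₀}`, stays in place. -/

/-- `IsExchangeable M ω σ` means the permutation `σ` of the positions of the word
`ω : Fin N → B` arises from a series of exchanges of adjacent commuting (orthogonal, i.e.
`M i j = 2`) simple reflections: the word obtained from `ω` by the arrangement `σ` is
`ω ∘ σ`. -/
inductive IsExchangeable {B : Type*} (M : CoxeterMatrix B) {N : ℕ} (ω : Fin N → B) :
    Equiv.Perm (Fin N) → Prop
  | one : IsExchangeable M ω 1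
  | step (σ : Equiv.Perm (Fin N)) (p q : Fin N) (hpq : (p : ℕ) + 1 = (q : ℕ))
      (hcomm : M (ω (σ p)) (ω (σ q)) = 2)
      (hσ : IsExchangeable M ω σ) : IsExchangeable M ω (σ * Equiv.swap p q)

theorem Equiv.swap_apply_lt_swap_apply {N : ℕ} {p q a b : Fin N} (hpq : (p : ℕ) + 1 = q)
    (hab : a < b) (h : ¬(a = p ∧ b = q)) : Equiv.swap p q a < Equiv.swap p q b := by
  rw [Equiv.swap_apply_def, Equiv.swap_apply_def]
  split_ifs <;> simp only [Fin.lt_def, Fin.ext_iff] at * <;> omega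

theorem List.ofFn_comp_swap_of_add_one_eq {α : Type*} {N : ℕ} (u : Fin N → α) {p q : Fin N}
    (hpq : (p : ℕ) + 1 = q) :
    List.ofFn (u ∘ Equiv.swap p q) =
      (List.ofFn u).take p ++ u q :: u p :: (List.ofFn u).drop (p + 2) := by
  apply List.ext_getElem
  · simp only [List.length_ofFn, List.length_append, List.length_take, List.length_cons,
      List.length_drop]
    omega
  intro i h₁ h₂
  simp only [List.getElem_ofFn, Function.comp_apply, List.getElem_append, List.length_take,
    List.length_ofFn, List.getElem_take, List.getElem_cons, List.getElem_drop]
  rw [Equiv.swap_apply_def]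
  split_ifs <;> simp_all [Fin.ext_iff] <;> first | omega | (congr 1; ext; simp; omega)

theorem List.ofFn_eq_take_append_cons_cons {α : Type*} {N : ℕ} (u : Fin N → α) {p q : Fin N}
    (hpq : (p : ℕ) + 1 = q) :
    List.ofFn u = (List.ofFn u).take p ++ u p :: u q :: (List.ofFn u).drop (p + 2) := by
  obtain ⟨q, hq⟩ := q
  subst hpq
  conv_lhs => rw [← List.take_append_drop p (List.ofFn u),
    List.drop_eq_getElem_cons (by simp), List.drop_eq_getElem_cons (by simp; omega)]
  simp only [List.getElem_ofFn]

namespace CoxeterSystem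

variable {B W : Type*} [Group W] {M : CoxeterMatrix B} (cs : CoxeterSystem M W)

theorem commute_simple_of_eq_two {i j : B} (h : M i j = 2) :
    Commute (cs.simple i) (cs.simple j) := by
  have hsq := cs.simple_mul_simple_pow i j
  rwa [h, pow_two, mul_eq_one_iff_eq_inv, mul_inv_rev, inv_simple, inv_simple] at hsq

theorem wordProd_ofFn_comp_swap {N : ℕ} (u : Fin N → B) {p q : Fin N}
    (hpq : (p : ℕ) + 1 = q) (h : Commute (cs.simple (u p)) (cs.simple (u q))) :
    cs.wordProd (List.ofFn (u ∘ Equiv.swap p q)) = cs.wordProd (List.ofFn u) := by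
  conv_rhs => rw [List.ofFn_eq_take_append_cons_cons u hpq]
  rw [List.ofFn_comp_swap_of_add_one_eq u hpq]
  simp only [wordProd_append, wordProd_cons]
  rw [h.left_comm]

variable {cs}

theorem IsReduced.isLeftDescent_wordProd_cons {i : B} {l : List B}
    (hl : cs.IsReduced (i :: l)) : cs.IsLeftDescent (cs.wordProd (i :: l)) i := by
  rw [IsLeftDescent, hl.eq, wordProd_cons, simple_mul_simple_cancel_left]
  exact Nat.lt_succ_of_le (cs.length_wordProd_le l)

theorem IsReduced.isLeftDescent_wordProd_ofFn {N : ℕ} {v : Fin N → B}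
    (hv : cs.IsReduced (List.ofFn v)) (hN : 0 < N) :
    cs.IsLeftDescent (cs.wordProd (List.ofFn v)) (v ⟨0, hN⟩) := by
  obtain ⟨n, rfl⟩ : ∃ n, N = n + 1 := ⟨N - 1, by omega⟩
  rw [List.ofFn_succ] at hv ⊢
  exact hv.isLeftDescent_wordProd_cons

end CoxeterSystem

namespace IsExchangeable

variable {B : Type*} {M : CoxeterMatrix B} {N : ℕ} {ω : Fin N → B} {σ : Equiv.Perm (Fin N)}

theorem wordProd_ofFn_comp {W : Type*} [Group W] (cs : CoxeterSystem M W)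
    (hσ : IsExchangeable M ω σ) : cs.wordProd (List.ofFn (ω ∘ σ)) = cs.wordProd (List.ofFn ω) := by
  induction hσ with
  | one => rfl
  | step σ p q hpq hcomm _ ih =>
    rw [← ih, Equiv.Perm.coe_mul, ← Function.comp_assoc,
      cs.wordProd_ofFn_comp_swap (ω ∘ σ) hpq (cs.commute_simple_of_eq_two hcomm)]

theorem isReduced_ofFn_comp {W : Type*} [Group W] {cs : CoxeterSystem M W}
    (hσ : IsExchangeable M ω σ) (hω : cs.IsReduced (List.ofFn ω)) :
    cs.IsReduced (List.ofFn (ω ∘ σ)) := by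
  rw [CoxeterSystem.IsReduced, hσ.wordProd_ofFn_comp cs, hω.eq, List.length_ofFn,
    List.length_ofFn]

theorem inv_apply_lt_inv_apply (hσ : IsExchangeable M ω σ) {j k : Fin N} (hjk : j < k)
    (hM : M (ω j) (ω k) ≠ 2) : σ⁻¹ j < σ⁻¹ k := by
  induction hσ with
  | one => exact hjk
  | step σ p q hpq hcomm _ ih =>
    simp only [mul_inv_rev, Equiv.swap_inv, Equiv.Perm.coe_mul, Function.comp_apply]
    refine Equiv.swap_apply_lt_swap_apply hpq ih ?_
    rintro ⟨hj, hk⟩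
    rw [← hj, ← hk] at hcomm
    exact hM (by simpa using hcomm)

end IsExchangeable

theorem stmt17_general {B W : Type*} [Group W]
    {M : CoxeterMatrix B} (cs : CoxeterSystem M W) (i₀ : B)
    (Wω : Subgroup W) (hWω : Wω = Subgroup.closure (cs.simple '' {i | i ≠ i₀}))
    (τl : W)
    (hτl_min : ∀ u ∈ Wω, cs.length (u * τl) = cs.length u + cs.length τl)
    (N : ℕ) (hN : 0 < N) (ω : Fin N → B)
    (hωred : cs.IsReduced (List.ofFn ω)) (hωprod : cs.wordProd (List.ofFn ω) = τl)
    (σ : Equiv.Perm (Fin N)) (hσ : IsExchangeable M ω σ) :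
    σ ⟨0, hN⟩ = ⟨0, hN⟩ ∧
      ∀ j k : Fin N, j < k → (M (ω j) (ω k) ≠ 2 ∨ ω j = ω k) → σ⁻¹ j < σ⁻¹ k := by
  have head_eq : ∀ σ', IsExchangeable M ω σ' → ω (σ' ⟨0, hN⟩) = i₀ := by
    intro σ' hσ'
    by_contra hne
    have hmem : cs.simple (ω (σ' ⟨0, hN⟩)) ∈ Wω := hWω ▸ Subgroup.subset_closure ⟨_, hne, rfl⟩
    have hdesc := (hσ'.isReduced_ofFn_comp hωred).isLeftDescent_wordProd_ofFn hN
    rw [hσ'.wordProd_ofFn_comp, hωprod, CoxeterSystem.IsLeftDescent,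
      Function.comp_apply, hτl_min _ hmem] at hdesc
    omega
  have order : ∀ j k : Fin N, j < k → (M (ω j) (ω k) ≠ 2 ∨ ω j = ω k) → σ⁻¹ j < σ⁻¹ k := by
    rintro j k hjk (hM | heq)
    · exact hσ.inv_apply_lt_inv_apply hjk hM
    · exact hσ.inv_apply_lt_inv_apply hjk (by rw [heq, M.diagonal]; decide)
  refine ⟨?_, order⟩
  by_contra hne
  have hpos : (⟨0, hN⟩ : Fin N) < σ ⟨0, hN⟩ := by
    rw [Fin.lt_def]
    exact Nat.pos_of_ne_zero fun h => hne (Fin.ext h)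
  have hlt := order _ _ hpos (Or.inr ((head_eq 1 .one).trans (head_eq σ hσ).symm))
  rw [Equiv.Perm.inv_def, Equiv.symm_apply_apply] at hlt
  exact Nat.not_lt_zero _ hlt

/-- Let `ω = ω_{i₀}` be a braidless fundamental weight (any two reduced words of a minimal
coset representative of `W_ω\W` differ by exchanges of adjacent commuting simple
reflections — hypothesis `hbraid`), and let `s_{i_1} ⋯ s_{i_N}` (the word `ω`) be a reduced
decomposition of the longest minimal coset representative `τ_ℓ` of `ᵚW`.  If `σ` is a
permutation of `{1, …, N}` arising from a series of exchanges of adjacent commuting simple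
reflections in this word, then `σ(1) = 1`; moreover, if `j < k` and either `s_{i_j}` and
`s_{i_k}` do not commute or `i_j = i_k`, then `σ⁻¹(j) < σ⁻¹(k)`. -/
theorem stmt17 {B W : Type*} [Group W] [Finite W]
    {M : CoxeterMatrix B} (cs : CoxeterSystem M W) (i₀ : B)
    (Wω : Subgroup W) (hWω : Wω = Subgroup.closure (cs.simple '' {i | i ≠ i₀}))
    (hbraid : ∀ τ : W, (∀ u ∈ Wω, cs.length (u * τ) = cs.length u + cs.length τ) →
      ∀ (m : ℕ) (u v : Fin m → B),
        cs.IsReduced (List.ofFn u) → cs.wordProd (List.ofFn u) = τ →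
        cs.IsReduced (List.ofFn v) → cs.wordProd (List.ofFn v) = τ →
        ∃ σ : Equiv.Perm (Fin m), IsExchangeable M u σ ∧ v = u ∘ σ)
    (τl : W)
    (hτl_min : ∀ u ∈ Wω, cs.length (u * τl) = cs.length u + cs.length τl)
    (hτl_long : ∀ τ : W, (∀ u ∈ Wω, cs.length (u * τ) = cs.length u + cs.length τ) →
        cs.length τ ≤ cs.length τl)
    (N : ℕ) (hN : 0 < N) (ω : Fin N → B)
    (hωred : cs.IsReduced (List.ofFn ω)) (hωprod : cs.wordProd (List.ofFn ω) = τl)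
    (σ : Equiv.Perm (Fin N)) (hσ : IsExchangeable M ω σ) :
    σ ⟨0, hN⟩ = ⟨0, hN⟩ ∧
      ∀ j k : Fin N, j < k → (M (ω j) (ω k) ≠ 2 ∨ ω j = ω k) → σ⁻¹ j < σ⁻¹ k :=
  stmt17_general cs i₀ Wω hWω τl hτl_min N hN ω hωred hωprod σ hσ
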